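/- arXiv:1005.5470 — 9 statements merged into one kernel-verified Lean document; each statement's English description precedes it below -/
import Mathlib

section
/- The V-polynomial has the spanning-subgraph state sum V(G) = Σ_{A ⊆ E(G)} x_{c_1} x_{c_2} ⋯ x_{c_{k(A)}} · ∏_{e∈A} γ_e, where k(A) is the number of connected components of the spanning subgraph (V(G), A) and c_l is the sum of the vertex weights in the l-th component. -/
open Finset

structure WGraph (S : Type) (L : Type) where
  V : Type
  E : Type
  [fV : Fintype V]
  [dV : DecidableEq V]
  [fE : Fintype E]
  [dE : DecidableEq E]
  ends : E → V × V
  ω : V → S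
  γ : E → L

attribute [instance] WGraph.fV WGraph.dV WGraph.fE WGraph.dE

namespace WGraph
variable {S L : Type}

def IsLoop (G : WGraph S L) (e : G.E) : Prop := (G.ends e).1 = (G.ends e).2

def delete (G : WGraph S L) (e₀ : G.E) : WGraph S L where
  V := G.V
  E := {e : G.E // e ≠ e₀}
  ends := fun e => G.ends e.1
  ω := G.ω
  γ := fun e => G.γ e.1

def contract [Add S] (G : WGraph S L) (e₀ : G.E) (h : ¬ G.IsLoop e₀) : WGraph S L where
  V := {v : G.V // v ≠ (G.ends e₀).2}
  E := {e : G.E // e ≠ e₀}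
  ends := fun e =>
    ((if hv : (G.ends e.1).1 = (G.ends e₀).2 then ⟨(G.ends e₀).1, h⟩
        else ⟨(G.ends e.1).1, hv⟩ : {v : G.V // v ≠ (G.ends e₀).2}),
     (if hv : (G.ends e.1).2 = (G.ends e₀).2 then ⟨(G.ends e₀).1, h⟩
        else ⟨(G.ends e.1).2, hv⟩))
  ω := fun v =>
    if v.1 = (G.ends e₀).1 then G.ω (G.ends e₀).1 + G.ω (G.ends e₀).2 else G.ω v.1
  γ := fun e => G.γ e.1

def mapEdges {L' : Type} (G : WGraph S L) (φ : L → L') : WGraph S L' where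
  V := G.V
  E := G.E
  ends := G.ends
  ω := G.ω
  γ := φ ∘ G.γ

def stateGraph (G : WGraph S L) (A : Finset G.E) : SimpleGraph G.V :=
  SimpleGraph.fromRel (fun v w => ∃ e ∈ A, G.ends e = (v, w))

noncomputable instance (G : WGraph S L) (A : Finset G.E) :
    Fintype (G.stateGraph A).ConnectedComponent := Fintype.ofFinite _

noncomputable def kcomp (G : WGraph S L) (A : Finset G.E) : ℕ :=
  Fintype.card (G.stateGraph A).ConnectedComponent

open scoped Classical in
noncomputable def compWeight [AddCommMonoid S] (G : WGraph S L) (A : Finset G.E)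
    (c : (G.stateGraph A).ConnectedComponent) : S :=
  ∑ v ∈ Finset.univ.filter (fun v => (G.stateGraph A).connectedComponentMk v = c), G.ω v

end WGraph

/-!
Both the state sum and `V` satisfy the loop and deletion–contraction recursions and agree on
edgeless graphs, so they coincide by induction on the number of edges. For the state sum, split
the edge sets `A` according to whether they contain the chosen edge `e`. Those avoiding `e` are the
states of `G − e`. If `e` is a loop, adding it to `A` changes no component. Otherwise the components
of `(V, A ∪ {e})` correspond to those of `(V(G/e), A)`, and the component weights agree because the
vertex weights of `G/e` are the push-forward of those of `G` along the quotient map `V(G) → V(G/e)`.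
-/

open SimpleGraph

theorem Finset.sum_univ_finset_eq_add_sum_insert {α M : Type*} [Fintype α] [DecidableEq α]
    [AddCommMonoid M] (a : α) (F : Finset α → M) :
    ∑ s, F s = ∑ s : Finset {x // x ≠ a}, F (s.map (Function.Embedding.subtype _)) +
      ∑ s : Finset {x // x ≠ a}, F (insert a (s.map (Function.Embedding.subtype _))) := by
  have huniv : (univ : Finset α) = insert a ((univ : Finset {x // x ≠ a}).image (↑)) := by
    ext x
    by_cases hx : x = a <;> simp [hx]
  have hinj := image_injective (Subtype.val_injective (p := (· ≠ a)))
  rw [← powerset_univ, huniv, sum_powerset_insert (by simp), powerset_image,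
    sum_image hinj.injOn, sum_image hinj.injOn, powerset_univ]
  simp only [map_eq_image, Function.Embedding.coe_subtype]

theorem Finset.sum_filter_fiberwise {α β M : Type*} [Fintype α] [Fintype β] [DecidableEq β]
    [AddCommMonoid M] (f : α → β) (ω : α → M) (p : β → Prop) [DecidablePred p] :
    ∑ b with p b, ∑ a with f a = b, ω a = ∑ a with p (f a), ω a := by
  rw [← sum_fiberwise_of_maps_to (s := univ.filter fun a => p (f a)) (t := univ.filter p) (g := f)
    (by simp)]
  refine sum_congr rfl fun b hb => sum_congr ?_ fun _ _ => rfl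
  ext a
  simp only [mem_filter, mem_univ, true_and] at hb ⊢
  exact ⟨fun h => ⟨h ▸ hb, h⟩, And.right⟩

theorem Finset.notMem_map_subtype_ne {α : Type*} (a : α) (s : Finset {x // x ≠ a}) :
    a ∉ s.map (Function.Embedding.subtype _) :=
  notMem_map_subtype_of_not_property s (not_not.2 rfl)

theorem Finset.sum_filter_eq_self {α M : Type*} [Fintype α] [DecidableEq α] [AddCommMonoid M]
    (ω : α → M) (a : α) : ∑ b with b = a, ω b = ω a := by
  simp [sum_filter]

namespace SimpleGraph

variable {V V' : Type*} {G : SimpleGraph V} {G' : SimpleGraph V'}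

theorem Reachable.map_of_adj {f : V → V'} (hf : ∀ v w, G.Adj v w → G'.Reachable (f v) (f w))
    {v w : V} (h : G.Reachable v w) : G'.Reachable (f v) (f w) := by
  rw [reachable_iff_reflTransGen] at h ⊢
  exact Relation.ReflTransGen.lift' f
    (fun v w hvw => (reachable_iff_reflTransGen _ _).1 (hf v w hvw)) _ _ h

def connectedComponentEquivOfReachable (f : V → V') (g : V' → V)
    (hf : ∀ v w, G.Adj v w → G'.Reachable (f v) (f w))
    (hg : ∀ v w, G'.Adj v w → G.Reachable (g v) (g w))
    (hgf : ∀ v, G.Reachable (g (f v)) v) (hfg : ∀ v', G'.Reachable (f (g v')) v') :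
    G.ConnectedComponent ≃ G'.ConnectedComponent where
  toFun := ConnectedComponent.lift (fun v => G'.connectedComponentMk (f v))
    fun _ _ p _ => ConnectedComponent.sound (Reachable.map_of_adj hf ⟨p⟩)
  invFun := ConnectedComponent.lift (fun v' => G.connectedComponentMk (g v'))
    fun _ _ p _ => ConnectedComponent.sound (Reachable.map_of_adj hg ⟨p⟩)
  left_inv := ConnectedComponent.ind fun v => ConnectedComponent.sound (hgf v)
  right_inv := ConnectedComponent.ind fun v' => ConnectedComponent.sound (hfg v')

-- Written exactly like `WGraph.compWeight`, so that `G.compWeight A c` is `c.weight G.ω` by `rfl`.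
open scoped Classical in
noncomputable def ConnectedComponent.weight {S : Type*} [AddCommMonoid S] [Fintype V]
    (ω : V → S) (c : G.ConnectedComponent) : S :=
  ∑ v ∈ univ.filter (fun v => G.connectedComponentMk v = c), ω v

variable {S R : Type*} [AddCommMonoid S] [CommMonoid R] [Fintype V]

theorem prod_weight_eq_of_reachable [Fintype V'] [DecidableEq V'] [Fintype G.ConnectedComponent]
    [Fintype G'.ConnectedComponent] (x : S → R) {ω : V → S} {ω' : V' → S} (f : V → V')
    (g : V' → V) (hf : ∀ v w, G.Adj v w → G'.Reachable (f v) (f w))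
    (hg : ∀ v w, G'.Adj v w → G.Reachable (g v) (g w))
    (hgf : ∀ v, G.Reachable (g (f v)) v) (hfg : ∀ v', G'.Reachable (f (g v')) v')
    (hω : ∀ v', ω' v' = ∑ v with f v = v', ω v) :
    ∏ c : G'.ConnectedComponent, x (c.weight ω') =
      ∏ c : G.ConnectedComponent, x (c.weight ω) := by
  classical
  let e := connectedComponentEquivOfReachable f g hf hg hgf hfg
  refine (Fintype.prod_equiv e _ _ fun c => congrArg x ?_).symm
  have hmk (v : V) : G'.connectedComponentMk (f v) = e c ↔ G.connectedComponentMk v = c :=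
    show e (G.connectedComponentMk v) = e c ↔ _ from e.injective.eq_iff
  simp only [ConnectedComponent.weight, hω, Finset.sum_filter_fiberwise, hmk]

theorem prod_weight_of_eq_bot [Fintype G.ConnectedComponent] (hG : G = ⊥) (x : S → R)
    (ω : V → S) : ∏ c : G.ConnectedComponent, x (c.weight ω) = ∏ v, x (ω v) := by
  subst hG
  classical
  have hmk (v w : V) : (⊥ : SimpleGraph V).connectedComponentMk v =
      (⊥ : SimpleGraph V).connectedComponentMk w ↔ v = w :=
    ConnectedComponent.eq.trans reachable_bot
  refine (Fintype.prod_bijective _ ⟨fun v w h => (hmk v w).1 h,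
    ConnectedComponent.ind fun v => ⟨v, rfl⟩⟩ _ _ fun v => ?_).symm
  simp [ConnectedComponent.weight, hmk, sum_filter]

end SimpleGraph

namespace WGraph

variable {S L : Type}

section StateGraph

variable {G : WGraph S L} {A : Finset G.E}

theorem stateGraph_adj {v w : G.V} :
    (G.stateGraph A).Adj v w ↔
      v ≠ w ∧ ∃ e ∈ A, G.ends e = (v, w) ∨ G.ends e = (w, v) := by
  simp only [stateGraph, SimpleGraph.fromRel_adj, ← exists_or, ← and_or_left]

theorem stateGraph_empty (G : WGraph S L) : G.stateGraph ∅ = ⊥ := by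
  ext v w
  simp [stateGraph_adj]

theorem reachable_ends_of_mem {e : G.E} (he : e ∈ A) :
    (G.stateGraph A).Reachable (G.ends e).1 (G.ends e).2 := by
  by_cases hl : (G.ends e).1 = (G.ends e).2
  · exact hl ▸ Reachable.refl _
  · exact Adj.reachable (stateGraph_adj.2 ⟨hl, e, he, Or.inl rfl⟩)

theorem reachable_of_stateGraph_adj {W : Type*} {H : SimpleGraph W} {f : G.V → W}
    (hf : ∀ e ∈ A, H.Reachable (f (G.ends e).1) (f (G.ends e).2)) (v w : G.V)
    (hvw : (G.stateGraph A).Adj v w) : H.Reachable (f v) (f w) := by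
  obtain ⟨-, e, he, hvw | hvw⟩ := stateGraph_adj.1 hvw
  · simpa [hvw] using hf e he
  · simpa [hvw] using (hf e he).symm

end StateGraph

theorem prod_compWeight_eq {L' R : Type} [AddCommMonoid S] [CommMonoid R] (x : S → R)
    (G : WGraph S L) (G' : WGraph S L') (A : Finset G.E) (A' : Finset G'.E) (f : G.V → G'.V)
    (g : G'.V → G.V)
    (hf : ∀ e ∈ A, (G'.stateGraph A').Reachable (f (G.ends e).1) (f (G.ends e).2))
    (hg : ∀ e ∈ A', (G.stateGraph A).Reachable (g (G'.ends e).1) (g (G'.ends e).2))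
    (hgf : ∀ v, (G.stateGraph A).Reachable (g (f v)) v)
    (hfg : ∀ v', (G'.stateGraph A').Reachable (f (g v')) v')
    (hω : ∀ v', G'.ω v' = ∑ v with f v = v', G.ω v) :
    ∏ c, x (G'.compWeight A' c) = ∏ c, x (G.compWeight A c) :=
  prod_weight_eq_of_reachable x f g (reachable_of_stateGraph_adj hf)
    (reachable_of_stateGraph_adj hg) hgf hfg hω

section Contract

variable [Add S] (G : WGraph S L) (e₀ : G.E) (h : ¬ G.IsLoop e₀)

def contractVertex (v : G.V) : (G.contract e₀ h).V :=
  if hv : v = (G.ends e₀).2 then ⟨(G.ends e₀).1, h⟩ else ⟨v, hv⟩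

theorem contractVertex_snd : G.contractVertex e₀ h (G.ends e₀).2 = ⟨(G.ends e₀).1, h⟩ :=
  dif_pos rfl

theorem contractVertex_of_ne {v : G.V} (hv : v ≠ (G.ends e₀).2) :
    G.contractVertex e₀ h v = ⟨v, hv⟩ :=
  dif_neg hv

theorem contractVertex_val (v : (G.contract e₀ h).V) : G.contractVertex e₀ h v.1 = v :=
  contractVertex_of_ne G e₀ h v.2

theorem contractVertex_fst_eq_snd :
    G.contractVertex e₀ h (G.ends e₀).1 = G.contractVertex e₀ h (G.ends e₀).2 :=
  (contractVertex_of_ne G e₀ h h).trans (contractVertex_snd G e₀ h).symm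

theorem contractVertex_eq_iff {v : G.V} {v' : (G.contract e₀ h).V} :
    G.contractVertex e₀ h v = v' ↔
      v = v'.1 ∨ v = (G.ends e₀).2 ∧ v'.1 = (G.ends e₀).1 := by
  refine Subtype.ext_iff.trans ?_
  by_cases hv : v = (G.ends e₀).2
  · subst hv
    simpa [contractVertex_snd, eq_comm] using fun hv' => absurd hv' v'.2
  · simp [contractVertex_of_ne G e₀ h hv, hv]

theorem reachable_contractVertex {B : Finset G.E} (he₀ : e₀ ∈ B) (v : G.V) :
    (G.stateGraph B).Reachable (G.contractVertex e₀ h v).1 v := by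
  by_cases hv : v = (G.ends e₀).2
  · subst hv
    rw [contractVertex_snd]
    exact reachable_ends_of_mem he₀
  · rw [contractVertex_of_ne G e₀ h hv]

end Contract

theorem contract_ω_eq_sum [AddCommMonoid S] (G : WGraph S L) (e₀ : G.E) (h : ¬ G.IsLoop e₀)
    (v' : (G.contract e₀ h).V) :
    (G.contract e₀ h).ω v' = ∑ v with G.contractVertex e₀ h v = v', G.ω v := by
  by_cases hv' : v'.1 = (G.ends e₀).1
  · have hfib : univ.filter (fun v => G.contractVertex e₀ h v = v') =
        {(G.ends e₀).1, (G.ends e₀).2} := by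
      ext v
      simp [contractVertex_eq_iff, hv']
    rw [hfib, sum_pair h]
    simp [contract, hv']
  · have hfib : univ.filter (fun v => G.contractVertex e₀ h v = v') = {v'.1} := by
      ext v
      simp [contractVertex_eq_iff, hv']
    rw [hfib, sum_singleton]
    simp [contract, hv']

variable {R : Type} [AddCommMonoid S] [CommSemiring R]

noncomputable def stateTerm (x : S → R) (G : WGraph S R) (A : Finset G.E) : R :=
  (∏ c, x (G.compWeight A c)) * ∏ e ∈ A, G.γ e

noncomputable def stateSum (x : S → R) (G : WGraph S R) : R :=
  ∑ A, G.stateTerm x A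

variable (x : S → R) (G : WGraph S R) {e₀ : G.E}

theorem stateTerm_map_subtype (A : Finset {e // e ≠ e₀}) :
    G.stateTerm x (A.map (Function.Embedding.subtype _)) = (G.delete e₀).stateTerm x A := by
  refine congrArg₂ (· * ·) ?_ (prod_map A _ G.γ)
  refine (prod_compWeight_eq x G (G.delete e₀) _ A id id ?_ ?_ (fun _ => .rfl) (fun _ => .rfl)
    fun v => (sum_filter_eq_self G.ω v).symm).symm
  · simp only [mem_map, Function.Embedding.coe_subtype]
    rintro _ ⟨e, he, rfl⟩
    exact reachable_ends_of_mem (G := G.delete e₀) he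
  · exact fun e he => reachable_ends_of_mem (mem_map_of_mem _ he)

theorem stateTerm_insert_of_isLoop (hl : G.IsLoop e₀) {A : Finset G.E} (hA : e₀ ∉ A) :
    G.stateTerm x (insert e₀ A) = G.γ e₀ * G.stateTerm x A := by
  have hloop : ∀ e ∈ insert e₀ A, (G.stateGraph A).Reachable (G.ends e).1 (G.ends e).2 := by
    intro e he
    rcases mem_insert.1 he with rfl | he
    · exact hl ▸ .rfl
    · exact reachable_ends_of_mem he
  have hcomp : ∏ c, x (G.compWeight (insert e₀ A) c) = ∏ c, x (G.compWeight A c) :=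
    prod_compWeight_eq x G G A _ id id (fun e he => reachable_ends_of_mem (mem_insert_of_mem he))
      hloop (fun _ => .rfl) (fun _ => .rfl) fun v => (sum_filter_eq_self G.ω v).symm
  rw [stateTerm, stateTerm, prod_insert hA, hcomp, mul_left_comm]

theorem stateTerm_insert_map_subtype (h : ¬ G.IsLoop e₀) (A : Finset {e // e ≠ e₀}) :
    G.stateTerm x (insert e₀ (A.map (Function.Embedding.subtype _))) =
      G.γ e₀ * (G.contract e₀ h).stateTerm x A := by
  set B := insert e₀ (A.map (Function.Embedding.subtype _))
  have hB : ∀ v, (G.stateGraph B).Reachable (G.contractVertex e₀ h v).1 v :=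
    reachable_contractVertex G e₀ h (mem_insert_self _ _)
  rw [stateTerm, prod_insert (notMem_map_subtype_ne e₀ A), mul_left_comm]
  refine congrArg (G.γ e₀ * ·) (congrArg₂ (· * ·) ?_ (prod_map A _ G.γ))
  refine (prod_compWeight_eq x G (G.contract e₀ h) B A (G.contractVertex e₀ h) Subtype.val ?_ ?_
    hB (fun v => by rw [contractVertex_val]) (contract_ω_eq_sum G e₀ h)).symm
  · intro e he
    rcases mem_insert.1 he with rfl | he
    · exact contractVertex_fst_eq_snd G e h ▸ .rfl
    · obtain ⟨e, heA, rfl⟩ := mem_map.1 he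
      exact reachable_ends_of_mem (G := G.contract e₀ h) heA
  · intro e he
    exact ((hB _).trans (reachable_ends_of_mem (mem_insert_of_mem (mem_map_of_mem _ he)))).trans
      (hB _).symm

theorem stateSum_of_isEmpty [IsEmpty G.E] : G.stateSum x = ∏ v, x (G.ω v) := by
  rw [stateSum, Fintype.sum_unique, stateTerm]
  simp only [show (default : Finset G.E) = ∅ from rfl, prod_empty, mul_one]
  exact prod_weight_of_eq_bot (stateGraph_empty G) x G.ω

theorem stateSum_of_isLoop (hl : G.IsLoop e₀) :
    G.stateSum x = (G.γ e₀ + 1) * (G.delete e₀).stateSum x := by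
  rw [add_one_mul, add_comm]
  simp only [stateSum, sum_univ_finset_eq_add_sum_insert e₀, stateTerm_map_subtype, mul_sum,
    stateTerm_insert_of_isLoop x G hl (notMem_map_subtype_ne e₀ _)]
  rfl

theorem stateSum_eq_delete_add_contract (h : ¬ G.IsLoop e₀) :
    G.stateSum x = (G.delete e₀).stateSum x + G.γ e₀ * (G.contract e₀ h).stateSum x := by
  simp only [stateSum, sum_univ_finset_eq_add_sum_insert e₀, stateTerm_insert_map_subtype x G h,
    stateTerm_map_subtype, mul_sum]
  rfl

end WGraph

/-- the V-polynomial has a spanning-subgraph state-sum expansion. -/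
theorem V_polynomial_state_sum {S : Type} [AddCommMonoid S] {R : Type} [CommRing R]
    (x : S → R) (Vpoly : WGraph S R → R)
    (hV1 : ∀ (G : WGraph S R) (e : G.E) (h : ¬ G.IsLoop e),
      Vpoly G = Vpoly (G.delete e) + G.γ e * Vpoly (G.contract e h))
    (hV2 : ∀ (G : WGraph S R) (e : G.E), G.IsLoop e →
      Vpoly G = (G.γ e + 1) * Vpoly (G.delete e))
    (hV3 : ∀ G : WGraph S R, IsEmpty G.E → Vpoly G = ∏ v : G.V, x (G.ω v)) :
    ∀ G : WGraph S R,
      Vpoly G = ∑ A : Finset G.E,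
        (∏ c : (G.stateGraph A).ConnectedComponent, x (G.compWeight A c)) *
          ∏ e ∈ A, G.γ e := by
  suffices h : ∀ n, ∀ G : WGraph S R, Fintype.card G.E = n → Vpoly G = G.stateSum x from
    fun G => h _ G rfl
  intro n
  induction n using Nat.strong_induction_on with
  | _ n ih =>
    rintro G rfl
    rcases isEmpty_or_nonempty G.E with hE | ⟨⟨e⟩⟩
    · rw [hV3 G hE, WGraph.stateSum_of_isEmpty]
    have hlt : Fintype.card (G.delete e).E < Fintype.card G.E :=
      Fintype.card_subtype_lt (p := (· ≠ e)) (x := e) (by simp)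
    by_cases hl : G.IsLoop e
    · rw [hV2 G e hl, WGraph.stateSum_of_isLoop x G hl, ih _ hlt _ rfl]
    · rw [hV1 G e hl, WGraph.stateSum_eq_delete_add_contract x G hl, ih _ hlt (G.delete e) rfl,
        ih _ hlt (G.contract e hl) rfl]
end

section
/- (Recipe theorem for V.) Let f be a function on vertex- and edge-weighted graphs satisfying: f(G) = α_e·f(G−e) + β_e·f(G/e) for every non-loop edge e (with all α_e ≠ 0), f(G) = (α_e + β_e)·f(G−e) for every loop e, and f(E_m) = ∏_{i=1}^m x_{ω_i} on m isolated vertices of weights ω_1,…,ω_m. Then f(G) = (∏_{e∈E(G)} α_e) · V(G, ω; x, {β_e/α_e}_{e∈E(G)}). -/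
open Finset

/-! Induction on the number of edges. Since `α_e ≠ 0`, the rule for `f` at an edge `e` is
`α_e` times the rule for `V` with edge parameter `β_e / α_e`, e.g.
`α_e f(G-e) + β_e f(G/e) = α_e (f(G-e) + (β_e/α_e) f(G/e))`, and both sides agree on edgeless
graphs; so the factor `∏ α_e` accumulates one edge at a time. -/

namespace WGraph
variable {S L : Type}

theorem card_E_delete_add_one (G : WGraph S L) (e : G.E) :
    Fintype.card (G.delete e).E + 1 = Fintype.card G.E := by
  rw [← Fintype.card_option]
  exact Fintype.card_congr (Equiv.optionSubtypeNe e)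

theorem prod_E_eq_mul_prod_delete {M : Type} [CommMonoid M] (G : WGraph S L) (e : G.E)
    (φ : L → M) :
    ∏ e', φ (G.γ e') = φ (G.γ e) * ∏ e' : (G.delete e).E, φ ((G.delete e).γ e') :=
  Fintype.prod_eq_mul_prod_subtype_ne (φ ∘ G.γ) e

theorem prod_E_contract_eq_prod_E_delete [Add S] {M : Type} [CommMonoid M] (G : WGraph S L)
    (e : G.E) (h : ¬ G.IsLoop e) (φ : L → M) :
    ∏ e', φ ((G.contract e h).γ e') = ∏ e', φ ((G.delete e).γ e') := rfl

theorem mapEdges_γ {L' : Type} (G : WGraph S L) (φ : L → L') (e : G.E) :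
    (G.mapEdges φ).γ e = φ (G.γ e) := rfl

theorem mapEdges_delete {L' : Type} (G : WGraph S L) (φ : L → L') (e : G.E) :
    (G.delete e).mapEdges φ = (G.mapEdges φ).delete e := rfl

theorem mapEdges_contract [Add S] {L' : Type} (G : WGraph S L) (φ : L → L') (e : G.E)
    (h : ¬ G.IsLoop e) :
    (G.contract e h).mapEdges φ = (G.mapEdges φ).contract e h := rfl

end WGraph

open WGraph in
/-- recipe (universality) theorem for the V-polynomial.  Each edge carries a
pair of parameters `(α_e, β_e)`; `f` satisfies the generalized deletion-contraction rules and
`V` the defining rules of the V-polynomial. -/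
theorem V_polynomial_recipe {S : Type} [AddCommMonoid S] {R : Type} [Field R]
    (x : S → R) (f : WGraph S (R × R) → R) (Vpoly : WGraph S R → R)
    (hf1 : ∀ (G : WGraph S (R × R)) (e : G.E) (h : ¬ G.IsLoop e),
      f G = (G.γ e).1 * f (G.delete e) + (G.γ e).2 * f (G.contract e h))
    (hf2 : ∀ (G : WGraph S (R × R)) (e : G.E), G.IsLoop e →
      f G = ((G.γ e).1 + (G.γ e).2) * f (G.delete e))
    (hf3 : ∀ G : WGraph S (R × R), IsEmpty G.E → f G = ∏ v : G.V, x (G.ω v))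
    (hV1 : ∀ (G : WGraph S R) (e : G.E) (h : ¬ G.IsLoop e),
      Vpoly G = Vpoly (G.delete e) + G.γ e * Vpoly (G.contract e h))
    (hV2 : ∀ (G : WGraph S R) (e : G.E), G.IsLoop e →
      Vpoly G = (G.γ e + 1) * Vpoly (G.delete e))
    (hV3 : ∀ G : WGraph S R, IsEmpty G.E → Vpoly G = ∏ v : G.V, x (G.ω v)) :
    ∀ G : WGraph S (R × R), (∀ e : G.E, (G.γ e).1 ≠ 0) →
      f G = (∏ e : G.E, (G.γ e).1) *
        Vpoly (G.mapEdges (fun p => p.2 / p.1)) := by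
  intro G
  induction hn : Fintype.card G.E generalizing G with
  | zero =>
    intro _
    have hE : IsEmpty G.E := Fintype.card_eq_zero_iff.mp hn
    rw [hf3 G hE, hV3 (G.mapEdges _) hE, Fintype.prod_empty (fun e : G.E => (G.γ e).1), one_mul]
    rfl
  | succ n ih =>
    intro hα
    obtain ⟨e⟩ : Nonempty G.E := Fintype.card_pos_iff.mp (by omega)
    have hn' : Fintype.card (G.delete e).E = n := by
      have := G.card_E_delete_add_one e
      omega
    have hα' : ∀ e' : (G.delete e).E, ((G.delete e).γ e').1 ≠ 0 := fun e' => hα e'.1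
    have hαe := hα e
    rw [G.prod_E_eq_mul_prod_delete e Prod.fst]
    by_cases hl : G.IsLoop e
    · rw [hf2 G e hl, hV2 (G.mapEdges _) e hl, ih (G.delete e) hn' hα', mapEdges_delete,
        mapEdges_γ]
      field_simp
      ring
    · rw [hf1 G e hl, hV1 (G.mapEdges _) e hl, ih (G.delete e) hn' hα',
        ih (G.contract e hl) hn' hα', mapEdges_delete, mapEdges_contract, mapEdges_γ,
        prod_E_contract_eq_prod_E_delete]
      field_simp
end

section
/- If all vertex weights are positive integers and every edge weight γ_e is set equal to y−1, then V(G, ω; x, γ_e = y−1) = (y−1)^{|V(G)|} · W(G, ω; x/(y−1), y), where W is the Noble–Welsh W-polynomial. -/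
/-!
Both sides obey the same deletion–contraction recurrence: contraction coefficient `y - 1`, loop
factor `y`. For the right-hand side this is because contracting a non-loop removes exactly one
vertex, so the prefactor `(y - 1) ^ |V|` releases one factor `y - 1` onto the contraction term.
On edgeless graphs the prefactor cancels the denominators `y - 1` of `W`, so the two sides
agree there, and induction on the number of edges finishes the proof.
-/

open Finset

namespace WGraph

variable {S L : Type}

theorem card_E_delete_lt (G : WGraph S L) (e : G.E) :
    Fintype.card (G.delete e).E < Fintype.card G.E :=
  Fintype.card_subtype_lt (x := e) fun h => h rfl

theorem card_V_delete (G : WGraph S L) (e : G.E) :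
    Fintype.card (G.delete e).V = Fintype.card G.V :=
  rfl

theorem card_V_contract_add_one [Add S] (G : WGraph S L) (e : G.E) (h : ¬ G.IsLoop e) :
    Fintype.card (G.contract e h).V + 1 = Fintype.card G.V := by
  change Fintype.card {v : G.V // v ≠ (G.ends e).2} + 1 = _
  rw [Fintype.card_subtype_compl, Fintype.card_subtype_eq]
  exact Nat.sub_add_cancel (Fintype.card_pos_iff.mpr ⟨(G.ends e).2⟩)

theorem eq_of_deletion_contraction [Add S] {R : Type} [Add R] [Mul R] (a b : R)
    {f g : WGraph S L → R}
    (hf₁ : ∀ (G : WGraph S L) (e : G.E) (h : ¬ G.IsLoop e),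
      f G = f (G.delete e) + a * f (G.contract e h))
    (hf₂ : ∀ (G : WGraph S L) (e : G.E), G.IsLoop e → f G = b * f (G.delete e))
    (hg₁ : ∀ (G : WGraph S L) (e : G.E) (h : ¬ G.IsLoop e),
      g G = g (G.delete e) + a * g (G.contract e h))
    (hg₂ : ∀ (G : WGraph S L) (e : G.E), G.IsLoop e → g G = b * g (G.delete e))
    (h₀ : ∀ G : WGraph S L, IsEmpty G.E → f G = g G) (G : WGraph S L) : f G = g G := by
  induction hn : Fintype.card G.E using Nat.strong_induction_on generalizing G with
  | _ n ih =>
    rcases isEmpty_or_nonempty G.E with hE | hE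
    · exact h₀ G hE
    obtain ⟨e⟩ := hE
    have hlt : Fintype.card (G.delete e).E < n := hn ▸ G.card_E_delete_lt e
    have hdel : f (G.delete e) = g (G.delete e) := ih _ hlt _ rfl
    by_cases hloop : G.IsLoop e
    · rw [hf₂ G e hloop, hg₂ G e hloop, hdel]
    · have hcon : f (G.contract e hloop) = g (G.contract e hloop) :=
        ih _ hlt _ rfl
      rw [hf₁ G e hloop, hg₁ G e hloop, hdel, hcon]

end WGraph

/-- setting every edge weight of the V-polynomial equal to `y - 1` recovers the
Noble–Welsh W-polynomial:  `V(G,ω;x,γ_e = y-1) = (y-1)^{|V(G)|} W(G,ω; x/(y-1), y)`. -/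
theorem V_specializes_to_W {R : Type} [Field R] (x : ℕ+ → R) (y : R) (hy : y ≠ 1)
    (Vpoly : WGraph ℕ+ R → R) (W : WGraph ℕ+ Unit → R)
    (hV1 : ∀ (G : WGraph ℕ+ R) (e : G.E) (h : ¬ G.IsLoop e),
      Vpoly G = Vpoly (G.delete e) + G.γ e * Vpoly (G.contract e h))
    (hV2 : ∀ (G : WGraph ℕ+ R) (e : G.E), G.IsLoop e →
      Vpoly G = (G.γ e + 1) * Vpoly (G.delete e))
    (hV3 : ∀ G : WGraph ℕ+ R, IsEmpty G.E → Vpoly G = ∏ v : G.V, x (G.ω v))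
    (hW1 : ∀ (G : WGraph ℕ+ Unit) (e : G.E) (h : ¬ G.IsLoop e),
      W G = W (G.delete e) + W (G.contract e h))
    (hW2 : ∀ (G : WGraph ℕ+ Unit) (e : G.E), G.IsLoop e → W G = y * W (G.delete e))
    (hW3 : ∀ G : WGraph ℕ+ Unit, IsEmpty G.E →
      W G = ∏ v : G.V, (x (G.ω v) / (y - 1))) :
    ∀ G : WGraph ℕ+ Unit,
      Vpoly (G.mapEdges (fun _ => y - 1)) = (y - 1) ^ (Fintype.card G.V) * W G := by
  have hy' : y - 1 ≠ 0 := sub_ne_zero.2 hy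
  refine WGraph.eq_of_deletion_contraction (y - 1) y
    (fun G e h => hV1 (G.mapEdges _) e h)
    (fun G e h => by rw [hV2 (G.mapEdges _) e h]; exact congrArg (· * _) (sub_add_cancel y 1))
    (fun G e h => ?_) (fun G e h => by rw [hW2 G e h, G.card_V_delete e]; ring) (fun G hE => ?_)
  · change _ * W G = (y - 1) ^ Fintype.card G.V * W (G.delete e) +
      (y - 1) * ((y - 1) ^ Fintype.card (G.contract e h).V * W (G.contract e h))
    rw [hW1 G e h, ← G.card_V_contract_add_one e h]
    ring
  · rw [hV3 _ hE, hW3 G hE, Finset.prod_div_distrib, Finset.prod_const, Finset.card_univ,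
      mul_div_cancel₀ _ (pow_ne_zero _ hy')]
    rfl
end

section
/- Let G be a graph with a magnetic field vector M_i ∈ ℂ^q at each vertex v_i, Hamiltonian h(σ) = −Σ_{{i,j}∈E} J_{i,j} δ(σ_i, σ_j) − Σ_{v_i∈V(G)} Σ_{α=1}^q M_{i,α} δ(α, σ_i), and partition function Z(G) = Σ_{σ: V(G)→{1,…,q}} e^{−β h(σ)}. Then for any non-loop edge e = {v_i, v_j}, Z(G) = Z(G−e) + (e^{β J_{i,j}} − 1)·Z(G/e), where in G/e the new vertex carries magnetic weight vector M_i + M_j. -/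
open Finset

/-- The variable-field q-state Potts Hamiltonian:
`h(σ) = -Σ_{e={i,j}} J_e δ(σ_i,σ_j) - Σ_i Σ_α M_{i,α} δ(α,σ_i)`. -/
noncomputable def pottsH (q : ℕ) (G : WGraph (Fin q → ℂ) ℂ) (σ : G.V → Fin q) : ℂ :=
  -(∑ e : G.E, G.γ e * (if σ (G.ends e).1 = σ (G.ends e).2 then 1 else 0))
    - ∑ v : G.V, ∑ α : Fin q, G.ω v α * (if α = σ v then 1 else 0)

/-- The variable-field q-state Potts partition function `Z(G) = Σ_σ e^{-β h(σ)}`. -/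
noncomputable def pottsZ (q : ℕ) (β : ℂ) (G : WGraph (Fin q → ℂ) ℂ) : ℂ :=
  ∑ σ : G.V → Fin q, Complex.exp (-β * pottsH q G σ)

/-! Since `δ ∈ {0, 1}`, the Boltzmann factor of the edge `e = {i, j}` splits as
`e^{β J δ(σᵢ, σⱼ)} = 1 + (e^{β J} - 1) δ(σᵢ, σⱼ)`. The first summand gives `Z(G - e)`. In the
second only the colourings with `σᵢ = σⱼ` survive; these are exactly the colourings of `G / e`,
and they have the same energy there because the merged vertex carries the field `Mᵢ + Mⱼ`. -/

def Equiv.subtypeApplyEqApplyEquiv {V α : Type*} [DecidableEq V] {i j : V} (hij : i ≠ j) :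
    {σ : V → α // σ i = σ j} ≃ ({v // v ≠ j} → α) where
  toFun σ v := σ.1 v
  invFun τ := ⟨fun v => if hv : v = j then τ ⟨i, hij⟩ else τ ⟨v, hv⟩, by simp [hij]⟩
  left_inv σ := by
    ext v
    by_cases hv : v = j
    · subst hv
      simp [σ.2]
    · simp [hv]
  right_inv τ := by
    ext v
    simp [v.2]

theorem sum_ite_apply_eq_apply_eq_sum_restrict {V α M : Type*} [Fintype V] [DecidableEq V]
    [Fintype α] [DecidableEq α] [AddCommMonoid M] {i j : V} (hij : i ≠ j)
    (g : ({v // v ≠ j} → α) → M) :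
    ∑ σ : V → α, (if σ i = σ j then g (fun v => σ v) else 0) = ∑ τ, g τ := by
  rw [← Finset.sum_filter,
    Finset.sum_subtype (p := fun σ : V → α => σ i = σ j) _ fun σ => by simp]
  exact (Equiv.subtypeApplyEqApplyEquiv hij).sum_comp g

theorem sum_subtype_ne_ite_add_apply {V α M : Type*} [Fintype V] [DecidableEq V]
    [AddCommMonoid M] {i j : V} (hij : i ≠ j) (φ : V → α → M) (σ : V → α) (hσ : σ i = σ j) :
    ∑ v : {v // v ≠ j}, (if v.1 = i then φ i + φ j else φ v) (σ v) = ∑ v, φ v (σ v) := by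
  have split : ∀ v : {v // v ≠ j}, (if v.1 = i then φ i + φ j else φ v) (σ v) =
      φ v (σ v) + if v = ⟨i, hij⟩ then φ j (σ j) else 0 := by
    rintro ⟨v, hv⟩
    by_cases hvi : v = i
    · subst hvi
      simp [hσ]
    · simp [hvi]
  rw [Fintype.sum_eq_add_sum_subtype_ne _ j, Finset.sum_congr rfl fun v _ => split v,
    Finset.sum_add_distrib, Finset.sum_ite_eq']
  simp [add_comm]

section Potts

variable (q : ℕ) (G : WGraph (Fin q → ℂ) ℂ)

theorem pottsH_eq (σ : G.V → Fin q) :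
    pottsH q G σ =
      -(∑ e, if σ (G.ends e).1 = σ (G.ends e).2 then G.γ e else 0) - ∑ v, G.ω v (σ v) := by
  simp [pottsH, mul_ite]

theorem pottsH_eq_pottsH_delete_sub (e : G.E) (σ : G.V → Fin q) :
    pottsH q G σ =
      pottsH q (G.delete e) σ - if σ (G.ends e).1 = σ (G.ends e).2 then G.γ e else 0 := by
  rw [pottsH_eq q G, pottsH_eq q (G.delete e) σ, Fintype.sum_eq_add_sum_subtype_ne _ e]
  simp only [WGraph.delete]
  abel

theorem pottsH_contract_restrict (e : G.E) (h : ¬ G.IsLoop e) (σ : G.V → Fin q)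
    (hσ : σ (G.ends e).1 = σ (G.ends e).2) :
    pottsH q (G.contract e h) (fun v : {v // v ≠ (G.ends e).2} => σ v) =
      pottsH q (G.delete e) σ := by
  have merge : ∀ x : G.V, σ (if hx : x = (G.ends e).2 then
      (⟨(G.ends e).1, h⟩ : {v // v ≠ (G.ends e).2}) else ⟨x, hx⟩).1 = σ x := by
    intro x
    split_ifs with hx
    · rw [hx, hσ]
    · rfl
  rw [pottsH_eq q (G.contract e h) (fun v : {v // v ≠ (G.ends e).2} => σ v),
    pottsH_eq q (G.delete e) σ]
  simp only [WGraph.delete, WGraph.contract, merge]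
  congr 1
  exact sum_subtype_ne_ite_add_apply h G.ω σ hσ

theorem exp_neg_mul_pottsH_eq (β : ℂ) (e : G.E) (σ : G.V → Fin q) :
    Complex.exp (-β * pottsH q G σ) =
      Complex.exp (-β * pottsH q (G.delete e) σ) +
        (Complex.exp (β * G.γ e) - 1) *
          if σ (G.ends e).1 = σ (G.ends e).2 then
            Complex.exp (-β * pottsH q (G.delete e) σ) else 0 := by
  rw [pottsH_eq_pottsH_delete_sub q G e σ]
  split_ifs
  · rw [mul_sub, neg_mul β (G.γ e), sub_neg_eq_add, Complex.exp_add]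
    ring
  · simp

end Potts

/-- deletion-contraction for the variable-field Potts partition function at a
non-loop edge: `Z(G) = Z(G-e) + (e^{βJ_e}-1) Z(G/e)`, the contracted vertex carrying the sum
of the two magnetic weight vectors. -/
theorem pottsZ_deletion_contraction (q : ℕ) (β : ℂ) (G : WGraph (Fin q → ℂ) ℂ)
    (e : G.E) (h : ¬ G.IsLoop e) :
    pottsZ q β G =
      pottsZ q β (G.delete e) +
        (Complex.exp (β * G.γ e) - 1) * pottsZ q β (G.contract e h) := by
  have agreeing : ∑ σ : G.V → Fin q, (if σ (G.ends e).1 = σ (G.ends e).2 then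
      Complex.exp (-β * pottsH q (G.delete e) σ) else 0) = pottsZ q β (G.contract e h) := by
    refine (Finset.sum_congr rfl fun σ _ => ?_).trans
      (sum_ite_apply_eq_apply_eq_sum_restrict h fun τ =>
        Complex.exp (-β * pottsH q (G.contract e h) τ))
    split_ifs with hσ
    · rw [pottsH_contract_restrict q G e h σ hσ]
    · rfl
  simp only [pottsZ, exp_neg_mul_pottsH_eq q G β e]
  rw [Finset.sum_add_distrib, ← Finset.mul_sum, agreeing]
  rfl -- `(G.delete e).V` is `G.V`, so the first sum is `pottsZ q β (G.delete e)`
end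

section
/- (Zero-field Tutte specialization.) If h(σ) = −J Σ_{{i,j}∈E} δ(σ_i, σ_j) with constant interaction energy J, then Z(G) = q^{k(G)} v^{|V(G)| − k(G)} T(G; (q+v)/v, v+1), where v = e^{βJ} − 1 and T is the Tutte polynomial of G. -/
/-!
Writing `v = e^{βJ} - 1`, each Boltzmann factor is `e^{βJ δ} = 1 + v δ`; multiplying out gives the
Fortuin–Kasteleyn expansion `Z = ∑_{A ⊆ E} v^{|A|} q^{k(A)}`, because the colourings that are
constant along the edges of `A` are exactly those factoring through the components of `(V, A)`.
Each term of this sum is the corresponding Tutte term rescaled by `q^{k(E)} v^{|V| - k(E)}`, a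
monomial identity that only needs `k(E) ≤ k(A) ≤ |V| ≤ |A| + k(A)`. The last inequality is
rank–nullity for the difference map `ℚ^V → ℚ^A`, `f ↦ (f(u_e) - f(w_e))_e`, whose kernel
consists of the functions constant on components.
-/

open Finset

namespace WGraph

variable {S L : Type}

def ConstOnEdges (G : WGraph S L) {X : Type} (A : Finset G.E) (σ : G.V → X) : Prop :=
  ∀ e ∈ A, σ (G.ends e).1 = σ (G.ends e).2

instance (G : WGraph S L) {X : Type} [DecidableEq X] (A : Finset G.E) :
    DecidablePred (G.ConstOnEdges (X := X) A) :=
  fun _ => inferInstanceAs (Decidable (∀ e ∈ A, _))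

variable {G : WGraph S L}

lemma stateGraph_mono {A B : Finset G.E} (hAB : A ⊆ B) : G.stateGraph A ≤ G.stateGraph B := by
  intro v w hadj
  simp only [stateGraph, SimpleGraph.fromRel_adj] at hadj ⊢
  obtain ⟨hne, ⟨e, he, hends⟩ | ⟨e, he, hends⟩⟩ := hadj
  · exact ⟨hne, Or.inl ⟨e, hAB he, hends⟩⟩
  · exact ⟨hne, Or.inr ⟨e, hAB he, hends⟩⟩

lemma connectedComponentMk_fst_eq_snd {A : Finset G.E} {e : G.E} (he : e ∈ A) :
    (G.stateGraph A).connectedComponentMk (G.ends e).1 =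
      (G.stateGraph A).connectedComponentMk (G.ends e).2 := by
  by_cases hloop : (G.ends e).1 = (G.ends e).2
  · rw [hloop]
  · exact SimpleGraph.ConnectedComponent.connectedComponentMk_eq_of_adj
      ((SimpleGraph.fromRel_adj _ _ _).2 ⟨hloop, Or.inl ⟨e, he, rfl⟩⟩)

lemma ConstOnEdges.eq_of_reachable {X : Type} {A : Finset G.E} {σ : G.V → X}
    (hσ : G.ConstOnEdges A σ) {v w : G.V} (h : (G.stateGraph A).Reachable v w) : σ v = σ w := by
  obtain ⟨p⟩ := h
  induction p with
  | nil => rfl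
  | cons hadj _ ih =>
    refine Eq.trans ?_ ih
    obtain ⟨-, ⟨e, he, hends⟩ | ⟨e, he, hends⟩⟩ := (SimpleGraph.fromRel_adj _ _ _).1 hadj
    · simpa [hends] using hσ e he
    · simpa [hends] using (hσ e he).symm

lemma constOnEdges_iff_exists_comp {X : Type} {A : Finset G.E} {σ : G.V → X} :
    G.ConstOnEdges A σ ↔
      ∃ φ : (G.stateGraph A).ConnectedComponent → X,
        φ ∘ (G.stateGraph A).connectedComponentMk = σ := by
  constructor
  · intro hσ
    exact ⟨SimpleGraph.ConnectedComponent.lift σ fun _ _ p _ => hσ.eq_of_reachable ⟨p⟩, rfl⟩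
  · rintro ⟨φ, rfl⟩ e he
    exact congrArg φ (connectedComponentMk_fst_eq_snd he)

noncomputable def constOnEdgesEquiv (X : Type) (A : Finset G.E) :
    ((G.stateGraph A).ConnectedComponent → X) ≃ {σ : G.V → X // G.ConstOnEdges A σ} :=
  Equiv.ofBijective (fun φ => ⟨φ ∘ (G.stateGraph A).connectedComponentMk,
      constOnEdges_iff_exists_comp.2 ⟨φ, rfl⟩⟩)
    ⟨fun _ _ h => Function.Surjective.injective_comp_right (fun c => c.exists_rep)
      (congrArg Subtype.val h),
     fun σ => (constOnEdges_iff_exists_comp.1 σ.2).imp fun _ h => Subtype.ext h⟩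

lemma card_constOnEdges (X : Type) [Fintype X] [DecidableEq X] (A : Finset G.E) :
    Fintype.card {σ : G.V → X // G.ConstOnEdges A σ} = Fintype.card X ^ G.kcomp A := by
  classical
  rw [← Fintype.card_congr (constOnEdgesEquiv X A), Fintype.card_fun, kcomp]

lemma kcomp_le_kcomp_of_subset {A B : Finset G.E} (hAB : A ⊆ B) : G.kcomp B ≤ G.kcomp A := by
  simpa only [kcomp, Nat.card_eq_fintype_card] using
    SimpleGraph.ConnectedComponent.card_le_card_of_le (stateGraph_mono hAB)

lemma kcomp_le_card (A : Finset G.E) : G.kcomp A ≤ Fintype.card G.V :=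
  Fintype.card_le_of_surjective _ fun c => c.exists_rep

open Module in
lemma card_le_card_add_kcomp (A : Finset G.E) : Fintype.card G.V ≤ #A + G.kcomp A := by
  classical
  let D : (G.V → ℚ) →ₗ[ℚ] (A → ℚ) :=
    LinearMap.pi fun e =>
      LinearMap.proj (R := ℚ) (φ := fun _ => ℚ) (G.ends e.1).1 - LinearMap.proj (G.ends e.1).2
  let P := LinearMap.funLeft ℚ ℚ (G.stateGraph A).connectedComponentMk
  have hker : LinearMap.ker D ≤ LinearMap.range P := fun σ hσ =>
    constOnEdges_iff_exists_comp.1 fun e he =>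
      sub_eq_zero.1 (congrFun (LinearMap.mem_ker.1 hσ) ⟨e, he⟩)
  calc Fintype.card G.V = finrank ℚ (G.V → ℚ) := (finrank_fintype_fun_eq_card ℚ).symm
    _ = finrank ℚ (LinearMap.range D) + finrank ℚ (LinearMap.ker D) :=
      D.finrank_range_add_finrank_ker.symm
    _ ≤ finrank ℚ (A → ℚ) + finrank ℚ (LinearMap.range P) :=
      add_le_add (Submodule.finrank_le _) (Submodule.finrank_mono hker)
    _ ≤ #A + G.kcomp A := by
      refine add_le_add (by simp) (P.finrank_range_le.trans ?_)
      simp [kcomp]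

lemma sum_prod_one_add_eq_sum_pow_kcomp {R : Type} [CommSemiring R] (X : Type) [Fintype X]
    [DecidableEq X] (x : R) :
    ∑ σ : G.V → X, ∏ e, (1 + x * if σ (G.ends e).1 = σ (G.ends e).2 then 1 else 0) =
      ∑ A : Finset G.E, x ^ #A * (Fintype.card X : R) ^ G.kcomp A := by
  calc _ = ∑ σ : G.V → X, ∑ A : Finset G.E, x ^ #A * if G.ConstOnEdges A σ then 1 else 0 := by
        refine sum_congr rfl fun σ _ => ?_
        rw [prod_one_add, powerset_univ]
        refine sum_congr rfl fun A _ => ?_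
        rw [prod_mul_distrib, prod_const, prod_boole]
        congr
    _ = _ := by
      rw [sum_comm]
      refine sum_congr rfl fun A _ => ?_
      rw [← mul_sum, sum_boole, ← Fintype.card_subtype, card_constOnEdges, Nat.cast_pow]

end WGraph

lemma Complex.exp_mul_sum_boole {ι : Type} (s : Finset ι) (p : ι → Prop) [DecidablePred p]
    (c : ℂ) :
    Complex.exp (c * ∑ i ∈ s, if p i then 1 else 0) =
      ∏ i ∈ s, (1 + (Complex.exp c - 1) * if p i then 1 else 0) := by
  rw [mul_sum, Complex.exp_sum]
  refine prod_congr rfl fun i _ => ?_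
  split_ifs <;> simp

lemma pow_mul_pow_eq_mul_tutte_term {K : Type} [Field K] {q v : K} (hv : v ≠ 0) {n m k kA : ℕ}
    (hk : k ≤ kA) (hkA : kA ≤ n) (hn : n ≤ m + kA) :
    v ^ m * q ^ kA =
      q ^ k * v ^ (n - k) * (((q + v) / v - 1) ^ (kA - k) * (v + 1 - 1) ^ (m - (n - kA))) := by
  have hq : q ^ k * q ^ (kA - k) = q ^ kA := by rw [← pow_add, Nat.add_sub_cancel' hk]
  have hv' : v ^ (n - k) * v ^ (m - (n - kA)) = v ^ m * v ^ (kA - k) := by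
    rw [← pow_add, ← pow_add]
    congr 1
    omega
  rw [show (q + v) / v - 1 = q / v by field_simp; ring, add_sub_cancel_right, div_pow, ← hq]
  field_simp
  linear_combination -(q ^ k * q ^ (kA - k)) * hv'

/-- zero-field Tutte specialization: with constant interaction energy `J`,
`Z(G) = q^{k(G)} v^{|V(G)|-k(G)} T(G;(q+v)/v, v+1)` where `v = e^{βJ}-1 ≠ 0` and
`T(G;x,y) = Σ_{A⊆E} (x-1)^{r(E)-r(A)} (y-1)^{|A|-r(A)}`, `r(A) = |V(G)| - k(A)`. -/
theorem pottsZ_zero_field_eq_Tutte (q : ℕ) (β J : ℂ) (G : WGraph Unit Unit)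
    (hv : Complex.exp (β * J) - 1 ≠ 0) :
    (∑ σ : G.V → Fin q, Complex.exp (-β *
        (-(J * ∑ e : G.E, if σ (G.ends e).1 = σ (G.ends e).2 then (1 : ℂ) else 0)))) =
      (q : ℂ) ^ (G.kcomp Finset.univ) *
      (Complex.exp (β * J) - 1) ^ (Fintype.card G.V - G.kcomp Finset.univ) *
      (∑ A : Finset G.E,
        (((q : ℂ) + (Complex.exp (β * J) - 1)) / (Complex.exp (β * J) - 1) - 1) ^
            (G.kcomp A - G.kcomp Finset.univ) *
          ((Complex.exp (β * J) - 1 + 1) - 1) ^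
            (A.card - (Fintype.card G.V - G.kcomp A))) := by
  simp_rw [neg_mul_neg, ← mul_assoc, Complex.exp_mul_sum_boole]
  rw [WGraph.sum_prod_one_add_eq_sum_pow_kcomp, Fintype.card_fin, mul_sum]
  exact sum_congr rfl fun A _ => pow_mul_pow_eq_mul_tutte_term hv
    (WGraph.kcomp_le_kcomp_of_subset (subset_univ A)) (WGraph.kcomp_le_card A)
    (WGraph.card_le_card_add_kcomp A)
end

section
/- (Single-preferred-spin model.) Suppose each vertex v_i of G carries a complex value z_i and the Hamiltonian is h(σ) = −Σ_{{i,j}∈E} J_{i,j} δ(σ_i, σ_j) − Σ_{v_i} z_i δ(1, σ_i). Then Z(G) = V(G, ω; {X_z}_{z∈ℂ}, {e^{β J_e} − 1}_{e∈E(G)}), where ω(v_i) = z_i and X_z = e^{βz} + q − 1. -/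
/-!
Both sides satisfy the deletion–contraction recurrence of the V-polynomial and agree on edgeless
graphs, so they agree by induction on the number of edges. For the partition function, the
Boltzmann factor of a non-loop edge `e = uw` is `1 + (e^{βJ_e} - 1) δ(σ_u, σ_w)`; the `δ`-term is
a sum over the colourings constant on `e`, i.e. over the colourings of `G/e`, and the field terms
of `u` and `w` merge into that of the contracted vertex because `e^{β(z_u + z_w)} =
e^{βz_u} e^{βz_w}`. On an edgeless graph each vertex contributes `e^{βz_v} + (q - 1)`.
-/

open Finset

namespace WGraph

variable {S L : Type} {R : Type*} [CommRing R]

/-- The defining recurrence of the V-polynomial, with vertex variables evaluated by `x` and edge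
weights read through `c`. -/
structure IsDeletionContraction [Add S] (x : S → R) (c : L → R) (F : WGraph S L → R) : Prop where
  nonloop : ∀ (G : WGraph S L) (e : G.E) (h : ¬ G.IsLoop e),
    F G = F (G.delete e) + c (G.γ e) * F (G.contract e h)
  loop : ∀ (G : WGraph S L) (e : G.E), G.IsLoop e → F G = (c (G.γ e) + 1) * F (G.delete e)
  empty : ∀ G : WGraph S L, IsEmpty G.E → F G = ∏ v : G.V, x (G.ω v)

namespace IsDeletionContraction

variable [Add S] {x : S → R}

theorem comp_mapEdges {L' : Type} {c : L' → R} {F : WGraph S L' → R}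
    (hF : IsDeletionContraction x c F) (φ : L → L') :
    IsDeletionContraction x (c ∘ φ) (fun G => F (G.mapEdges φ)) where
  nonloop G e h := hF.nonloop (G.mapEdges φ) e h
  loop G e he := hF.loop (G.mapEdges φ) e he
  empty G hE := hF.empty (G.mapEdges φ) hE

theorem unique {c : L → R} {F F' : WGraph S L → R} (hF : IsDeletionContraction x c F)
    (hF' : IsDeletionContraction x c F') : F = F' := by
  funext G
  induction hn : Fintype.card G.E using Nat.strong_induction_on generalizing G with
  | _ n ih =>
    rcases isEmpty_or_nonempty G.E with hE | ⟨⟨e⟩⟩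
    · rw [hF.empty G hE, hF'.empty G hE]
    have hdel : Fintype.card (G.delete e).E < n :=
      hn ▸ Fintype.card_subtype_lt (p := fun e' => e' ≠ e) (x := e) (by simp)
    by_cases he : G.IsLoop e
    · rw [hF.loop G e he, hF'.loop G e he, ih _ hdel _ rfl]
    · rw [hF.nonloop G e he, hF'.nonloop G e he, ih _ hdel _ rfl, ih _ hdel (G.contract e he) rfl]

end IsDeletionContraction

def contractMap [Add S] (G : WGraph S L) (e : G.E) (h : ¬ G.IsLoop e) :
    G.V → (G.contract e h).V :=
  fun v => if hv : v = (G.ends e).2 then ⟨(G.ends e).1, h⟩ else ⟨v, hv⟩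

section contractMap

variable [Add S] (G : WGraph S L) (e : G.E) (h : ¬ G.IsLoop e)

theorem contractMap_val (v : {v : G.V // v ≠ (G.ends e).2}) : G.contractMap e h v.1 = v :=
  dif_neg v.2

theorem contractMap_fst : G.contractMap e h (G.ends e).1 = ⟨(G.ends e).1, h⟩ := dif_neg h

theorem contractMap_snd : G.contractMap e h (G.ends e).2 = ⟨(G.ends e).1, h⟩ := dif_pos rfl

theorem sum_comp_contractMap {Q M : Type*} [Fintype Q] [DecidableEq Q] [AddCommMonoid M]
    (g : (G.V → Q) → M) :
    ∑ σ : (G.contract e h).V → Q, g (σ ∘ G.contractMap e h) =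
      ∑ σ : G.V → Q with σ (G.ends e).1 = σ (G.ends e).2, g σ := by
  refine Finset.sum_nbij' (fun σ => σ ∘ G.contractMap e h) (fun σ v => σ v.1) ?_ ?_ ?_ ?_ ?_
  · intro σ _
    simp [contractMap_fst, contractMap_snd]
  · simp
  · intro σ _
    funext v
    exact congrArg σ (contractMap_val G e h v)
  · intro σ hσ
    funext v
    by_cases hv : v = (G.ends e).2
    · subst hv
      simpa [contractMap_snd] using hσ
    · simp [contractMap, hv]
  · simp

end contractMap

variable {Q : Type*} [DecidableEq Q] (s₀ : Q) (a : L → R) (b : S → R)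

/-- For `a J = e^{βJ}` and `b z = e^{βz}` this is `e^{-βh(σ)}` for the single-preferred-spin
Hamiltonian `h`. -/
def spinWeight (G : WGraph S L) (σ : G.V → Q) : R :=
  (∏ e : G.E, if σ (G.ends e).1 = σ (G.ends e).2 then a (G.γ e) else 1) *
    ∏ v : G.V, if σ v = s₀ then b (G.ω v) else 1

theorem spinWeight_eq_mul_spinWeight_delete (G : WGraph S L) (e : G.E) (σ : G.V → Q) :
    spinWeight s₀ a b G σ =
      (if σ (G.ends e).1 = σ (G.ends e).2 then a (G.γ e) else 1) *
        spinWeight s₀ a b (G.delete e) σ := by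
  simp only [spinWeight]
  rw [Fintype.prod_eq_mul_prod_subtype_ne _ e, mul_assoc]
  rfl

theorem spinWeight_contract [Add S] (hb : ∀ z z', b (z + z') = b z * b z') (G : WGraph S L)
    (e : G.E) (h : ¬ G.IsLoop e) (σ : (G.contract e h).V → Q) :
    spinWeight s₀ a b (G.contract e h) σ =
      spinWeight s₀ a b (G.delete e) (σ ∘ G.contractMap e h) := by
  set u : (G.contract e h).V := ⟨(G.ends e).1, h⟩
  have hmerge : ∀ v : (G.contract e h).V,
      (if σ v = s₀ then b ((G.contract e h).ω v) else 1) =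
        (if σ v = s₀ then b (G.ω v.1) else 1) *
          if v = u then (if σ u = s₀ then b (G.ω (G.ends e).2) else 1) else 1 := by
    intro v
    by_cases hv : v = u
    · subst hv
      by_cases hσ : σ u = s₀ <;> simp [contract, u, hσ, hb]
    · have hv' : v.1 ≠ (G.ends e).1 := fun h' => hv (Subtype.ext h')
      rw [if_neg hv, mul_one]
      simp [contract, hv']
  simp only [spinWeight]
  congr 1
  show _ = ∏ x : G.V, if σ (G.contractMap e h x) = s₀ then b (G.ω x) else 1
  rw [Fintype.prod_eq_mul_prod_subtype_ne _ (G.ends e).2, Fintype.prod_congr _ _ hmerge,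
    Finset.prod_mul_distrib, Finset.prod_ite_eq']
  simp only [contractMap_val, contractMap_snd, Finset.mem_univ, if_true]
  exact mul_comm _ _

variable [Fintype Q]

def spinPartition (G : WGraph S L) : R :=
  ∑ σ : G.V → Q, spinWeight s₀ a b G σ

theorem spinPartition_of_isEmpty (G : WGraph S L) (hE : IsEmpty G.E) :
    spinPartition s₀ a b G = ∏ v : G.V, (b (G.ω v) + Fintype.card Q - 1) := by
  simp only [spinPartition, spinWeight, Finset.univ_eq_empty, Finset.prod_empty, one_mul]
  rw [← Fintype.prod_sum (fun v s => if s = s₀ then b (G.ω v) else 1)]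
  refine Finset.prod_congr rfl fun v _ => ?_
  have hshift : ∀ s : Q,
      (if s = s₀ then b (G.ω v) else 1) = 1 + if s = s₀ then b (G.ω v) - 1 else 0 := by
    intro s
    split_ifs <;> ring
  simp only [hshift, Finset.sum_add_distrib, Finset.sum_ite_eq', Finset.mem_univ, if_true,
    Finset.sum_const, Finset.card_univ, nsmul_eq_mul, mul_one]
  ring

theorem spinPartition_of_isLoop (G : WGraph S L) (e : G.E) (he : G.IsLoop e) :
    spinPartition s₀ a b G = a (G.γ e) * spinPartition s₀ a b (G.delete e) := by
  simp only [spinPartition, Finset.mul_sum, spinWeight_eq_mul_spinWeight_delete s₀ a b G e]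
  refine Finset.sum_congr rfl fun σ _ => ?_
  rw [if_pos (congrArg σ he)]

theorem spinPartition_of_not_isLoop [Add S] (hb : ∀ z z', b (z + z') = b z * b z')
    (G : WGraph S L) (e : G.E) (h : ¬ G.IsLoop e) :
    spinPartition s₀ a b G = spinPartition s₀ a b (G.delete e) +
      (a (G.γ e) - 1) * spinPartition s₀ a b (G.contract e h) := by
  have hsplit : ∀ σ : G.V → Q, spinWeight s₀ a b G σ = spinWeight s₀ a b (G.delete e) σ +
      if σ (G.ends e).1 = σ (G.ends e).2 then (a (G.γ e) - 1) * spinWeight s₀ a b (G.delete e) σ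
      else 0 := by
    intro σ
    rw [spinWeight_eq_mul_spinWeight_delete s₀ a b G e]
    split_ifs <;> ring
  calc spinPartition s₀ a b G
      = ∑ σ : G.V → Q, spinWeight s₀ a b (G.delete e) σ + ∑ σ : G.V → Q,
          if σ (G.ends e).1 = σ (G.ends e).2 then
            (a (G.γ e) - 1) * spinWeight s₀ a b (G.delete e) σ else 0 :=
        (Fintype.sum_congr _ _ hsplit).trans Finset.sum_add_distrib
    _ = spinPartition s₀ a b (G.delete e) + (a (G.γ e) - 1) *
          ∑ σ : G.V → Q with σ (G.ends e).1 = σ (G.ends e).2, spinWeight s₀ a b (G.delete e) σ := by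
        -- `erw`: `(G.delete e).V` is `G.V` only after unfolding `delete`
        erw [← Finset.sum_filter, Finset.mul_sum]
        rfl
    _ = _ := by
        erw [← sum_comp_contractMap G e h]
        simp only [spinPartition, spinWeight_contract s₀ a b hb]
        rfl

theorem isDeletionContraction_spinPartition [Add S] (hb : ∀ z z', b (z + z') = b z * b z') :
    IsDeletionContraction (fun z => b z + Fintype.card Q - 1) (fun J => a J - 1)
      (spinPartition s₀ a b) where
  nonloop := spinPartition_of_not_isLoop s₀ a b hb
  loop G e he := by rw [spinPartition_of_isLoop s₀ a b G e he, sub_add_cancel]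
  empty := spinPartition_of_isEmpty s₀ a b

end WGraph

open WGraph

/-- single-preferred-spin model: with Hamiltonian
`h(σ) = -Σ J_{ij} δ(σ_i,σ_j) - Σ_i z_i δ(1,σ_i)`, the partition function is the evaluation of
the V-polynomial with complex vertex weights `ω(v_i) = z_i`, variables `x_z = e^{βz}+q-1`,
and edge weights `e^{βJ_e}-1`. -/
theorem pottsZ_single_spin_eq_V (q : ℕ) (hq : 0 < q) (β : ℂ)
    (Vpoly : WGraph ℂ ℂ → ℂ)
    (hV1 : ∀ (G : WGraph ℂ ℂ) (e : G.E) (h : ¬ G.IsLoop e),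
      Vpoly G = Vpoly (G.delete e) + G.γ e * Vpoly (G.contract e h))
    (hV2 : ∀ (G : WGraph ℂ ℂ) (e : G.E), G.IsLoop e →
      Vpoly G = (G.γ e + 1) * Vpoly (G.delete e))
    (hV3 : ∀ G : WGraph ℂ ℂ, IsEmpty G.E →
      Vpoly G = ∏ v : G.V, (Complex.exp (β * G.ω v) + (q : ℂ) - 1)) :
    ∀ G : WGraph ℂ ℂ,
      (∑ σ : G.V → Fin q, Complex.exp (-β *
        (-(∑ e : G.E, G.γ e * (if σ (G.ends e).1 = σ (G.ends e).2 then 1 else 0))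
          - ∑ v : G.V, G.ω v * (if σ v = (⟨0, hq⟩ : Fin q) then 1 else 0)))) =
      Vpoly (G.mapEdges (fun J => Complex.exp (β * J) - 1)) := by
  intro G
  have hV : IsDeletionContraction (fun z => Complex.exp (β * z) + q - 1) id Vpoly :=
    ⟨hV1, hV2, hV3⟩
  have hZ := isDeletionContraction_spinPartition (⟨0, hq⟩ : Fin q) (fun J => Complex.exp (β * J))
    (fun z => Complex.exp (β * z)) fun z z' => by rw [mul_add, Complex.exp_add]
  rw [Fintype.card_fin] at hZ
  have hexp : ∀ (p : Prop) [Decidable p] (z : ℂ),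
      Complex.exp (β * (z * if p then 1 else 0)) = if p then Complex.exp (β * z) else 1 := by
    intro p _ z
    split_ifs <;> simp
  calc _ = spinPartition (⟨0, hq⟩ : Fin q) (fun J => Complex.exp (β * J))
        (fun z => Complex.exp (β * z)) G := by
        refine Fintype.sum_congr _ _ fun σ => ?_
        simp only [spinWeight, ← hexp, ← Complex.exp_sum, ← Complex.exp_add]
        congr 1
        rw [← Finset.mul_sum, ← Finset.mul_sum]
        ring
    _ = _ := congrFun (hZ.unique (hV.comp_mapEdges fun J => Complex.exp (β * J) - 1)) G
end

section
/- (FK representation for the single-preferred-spin model.) With h(σ) = −Σ_{{i,j}∈E} J_{i,j} δ(σ_i, σ_j) − Σ_{v_i} z_i δ(1, σ_i), the partition function satisfies Z(G) = Σ_{A⊆E(G)} X_{z_{C_1}} ⋯ X_{z_{C_{k(A)}}} ∏_{e∈A} (e^{β J_e} − 1), where z_{C_l} is the sum of z_i over vertices in the l-th component of (V(G), A) and X_z = q − 1 + e^{βz}. -/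
open Finset

/-!
Expanding every edge factor as `e^{β J_e δ_e} = 1 + (e^{β J_e} - 1) δ_e` turns `Z` into a sum over
edge sets `A` of `∏_{e ∈ A} (e^{β J_e} - 1)` times a sum over the spin configurations that are
constant along every edge of `A`, i.e. constant on each component of `(V, A)`. That restricted sum
factorizes over the components: on a component `C` the common spin is either the preferred one,
contributing `e^{β z_C}`, or one of the `q - 1` others, contributing `1`.
-/

namespace SimpleGraph

variable {V α : Type*} {H : SimpleGraph V}

theorem Reachable.apply_eq_of_forall_adj {σ : V → α} (hσ : ∀ v w, H.Adj v w → σ v = σ w)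
    {v w : V} (h : H.Reachable v w) : σ v = σ w := by
  obtain ⟨p⟩ := h
  induction p with
  | nil => rfl
  | cons hadj _ ih => exact (hσ _ _ hadj).trans ih

theorem forall_adj_eq_iff_exists_comp_connectedComponentMk {σ : V → α} :
    (∀ v w, H.Adj v w → σ v = σ w) ↔
      ∃ τ : H.ConnectedComponent → α, τ ∘ H.connectedComponentMk = σ := by
  constructor
  · intro hσ
    exact ⟨ConnectedComponent.lift σ fun v w p _ => Reachable.apply_eq_of_forall_adj hσ ⟨p⟩,
      rfl⟩
  · rintro ⟨τ, rfl⟩ v w hadj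
    exact congrArg τ (ConnectedComponent.connectedComponentMk_eq_of_adj hadj)

theorem sum_comp_connectedComponentMk [Fintype V] [DecidableEq V] [Fintype α]
    [Fintype H.ConnectedComponent] [DecidableEq H.ConnectedComponent]
    [DecidablePred fun σ : V → α => ∀ v w, H.Adj v w → σ v = σ w]
    {M : Type*} [AddCommMonoid M] (f : (V → α) → M) :
    ∑ τ : H.ConnectedComponent → α, f (τ ∘ H.connectedComponentMk) =
      ∑ σ ∈ univ.filter fun σ : V → α => ∀ v w, H.Adj v w → σ v = σ w, f σ := by
  classical
  have hinj : Function.Injective fun τ : H.ConnectedComponent → α => τ ∘ H.connectedComponentMk :=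
    Function.Surjective.injective_comp_right fun c => c.ind fun v => ⟨v, rfl⟩
  rw [← sum_image hinj.injOn]
  congr 1
  ext σ
  simp [forall_adj_eq_iff_exists_comp_connectedComponentMk]

end SimpleGraph

theorem Fintype.sum_prod_comp_eq_prod_sum_fiber {ι κ α R : Type*} [Fintype ι] [Fintype κ]
    [DecidableEq κ] [Fintype α] [CommSemiring R] (p : ι → κ) (g : ι → α → R) :
    ∑ τ : κ → α, ∏ i, g i (τ (p i)) = ∏ k, ∑ a, ∏ i with p i = k, g i a := by
  rw [Fintype.prod_sum]
  refine Finset.sum_congr rfl fun τ _ => ?_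
  rw [← Finset.prod_fiberwise univ p]
  refine Finset.prod_congr rfl fun k _ => Finset.prod_congr rfl fun i hi => ?_
  rw [(mem_filter.mp hi).2]

theorem Fintype.sum_ite_eq_else_one {α R : Type*} [Fintype α] [DecidableEq α]
    [AddCommGroupWithOne R] (a : α) (x : R) : ∑ t : α, (if t = a then x else 1) = (Fintype.card α - 1 : R) + x := by
  have hsplit : ∀ t : α, (if t = a then x else 1) = (if t = a then x - 1 else 0) + 1 := by
    intro t; split_ifs <;> simp
  simp only [hsplit, sum_add_distrib, sum_ite_eq', sum_const, card_univ, nsmul_one]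
  abel

theorem Complex.exp_mul_sum_mul_boole {ι : Type*} [Fintype ι] (β : ℂ) (x : ι → ℂ)
    (p : ι → Prop) [DecidablePred p] :
    exp (β * ∑ i, x i * if p i then 1 else 0) =
      ∑ t : Finset ι, (∏ i ∈ t, (exp (β * x i) - 1)) * if ∀ i ∈ t, p i then 1 else 0 := by
  have hfactor : ∀ i, exp (β * (x i * if p i then 1 else 0)) =
      1 + (exp (β * x i) - 1) * if p i then 1 else 0 := by
    intro i; split_ifs <;> simp
  rw [mul_sum, exp_sum]
  simp only [hfactor, prod_one_add, powerset_univ, prod_mul_distrib, prod_boole]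

namespace WGraph

variable {S L : Type} (G : WGraph S L) (A : Finset G.E)

theorem forall_mem_ends_eq_iff_forall_adj {α : Type*} {σ : G.V → α} :
    (∀ e ∈ A, σ (G.ends e).1 = σ (G.ends e).2) ↔
      ∀ v w, (G.stateGraph A).Adj v w → σ v = σ w := by
  constructor
  · intro h v w hadj
    obtain ⟨-, ⟨e, he, hends⟩ | ⟨e, he, hends⟩⟩ := (SimpleGraph.fromRel_adj _ _ _).mp hadj
    · simpa [hends] using h e he
    · simpa [hends] using (h e he).symm
  · intro h e he
    by_cases hloop : (G.ends e).1 = (G.ends e).2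
    · rw [hloop]
    · exact h _ _ ((SimpleGraph.fromRel_adj _ _ _).mpr ⟨hloop, .inl ⟨e, he, rfl⟩⟩)

theorem sum_boole_mul_prod_eq_prod_components {α R : Type*} [Fintype α] [DecidableEq α]
    [CommSemiring R] [DecidableEq (G.stateGraph A).ConnectedComponent] (g : G.V → α → R) :
    ∑ σ : G.V → α, (if ∀ e ∈ A, σ (G.ends e).1 = σ (G.ends e).2 then 1 else 0) *
        ∏ v, g v (σ v) =
      ∏ c : (G.stateGraph A).ConnectedComponent,
        ∑ a, ∏ v with (G.stateGraph A).connectedComponentMk v = c, g v a := by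
  classical
  calc ∑ σ : G.V → α, (if ∀ e ∈ A, σ (G.ends e).1 = σ (G.ends e).2 then 1 else 0) *
        ∏ v, g v (σ v)
    _ = ∑ σ ∈ univ.filter fun σ : G.V → α => ∀ v w, (G.stateGraph A).Adj v w → σ v = σ w,
          ∏ v, g v (σ v) := by
      simp only [sum_filter, forall_mem_ends_eq_iff_forall_adj, ite_mul, one_mul, zero_mul]
    _ = ∑ τ : (G.stateGraph A).ConnectedComponent → α,
          ∏ v, g v (τ ((G.stateGraph A).connectedComponentMk v)) :=
      (SimpleGraph.sum_comp_connectedComponentMk _).symm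
    _ = _ := Fintype.sum_prod_comp_eq_prod_sum_fiber _ _

end WGraph

/-- FK representation, single-preferred-spin model:
`Z(G) = Σ_{A⊆E} X_{z_{C_1}} ⋯ X_{z_{C_{k(A)}}} Π_{e∈A}(e^{βJ_e}-1)` with
`X_z = q - 1 + e^{βz}` and `z_{C_l}` the sum of the `z_i` over the l-th component of `(V(G),A)`. -/
theorem pottsZ_single_spin_FK (q : ℕ) (hq : 0 < q) (β : ℂ) (G : WGraph ℂ ℂ) :
    (∑ σ : G.V → Fin q, Complex.exp (-β *
        (-(∑ e : G.E, G.γ e * (if σ (G.ends e).1 = σ (G.ends e).2 then 1 else 0))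
          - ∑ v : G.V, G.ω v * (if σ v = (⟨0, hq⟩ : Fin q) then 1 else 0)))) =
      ∑ A : Finset G.E,
        (∏ c : (G.stateGraph A).ConnectedComponent,
          ((q : ℂ) - 1 + Complex.exp (β * G.compWeight A c))) *
        ∏ e ∈ A, (Complex.exp (β * G.γ e) - 1) := by
  classical
  have hweight : ∀ σ : G.V → Fin q, Complex.exp (-β *
      (-(∑ e : G.E, G.γ e * (if σ (G.ends e).1 = σ (G.ends e).2 then 1 else 0))
        - ∑ v : G.V, G.ω v * (if σ v = (⟨0, hq⟩ : Fin q) then 1 else 0))) =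
      ∑ A : Finset G.E, (∏ e ∈ A, (Complex.exp (β * G.γ e) - 1)) *
        ((if ∀ e ∈ A, σ (G.ends e).1 = σ (G.ends e).2 then 1 else 0) *
          ∏ v, Complex.exp (β * (G.ω v * if σ v = ⟨0, hq⟩ then 1 else 0))) := by
    intro σ
    rw [show ∀ E Φ : ℂ, -β * (-E - Φ) = β * E + β * Φ by intros; ring, Complex.exp_add,
      Complex.exp_mul_sum_mul_boole, sum_mul, mul_sum, Complex.exp_sum]
    simp only [mul_assoc]
    congr!
  have hspin : ∀ (s : Finset G.V) (t : Fin q), ∏ v ∈ s,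
      Complex.exp (β * (G.ω v * if t = ⟨0, hq⟩ then 1 else 0)) =
        if t = ⟨0, hq⟩ then Complex.exp (β * ∑ v ∈ s, G.ω v) else 1 := by
    intro s t
    split_ifs <;> simp [mul_sum, Complex.exp_sum]
  simp only [hweight]
  rw [sum_comm]
  refine sum_congr rfl fun A _ => ?_
  rw [← mul_sum, G.sum_boole_mul_prod_eq_prod_components A
    fun v (t : Fin q) => Complex.exp (β * (G.ω v * if t = ⟨0, hq⟩ then 1 else 0)), mul_comm]
  congr 1
  refine prod_congr rfl fun c _ => ?_
  simp only [hspin, Fintype.sum_ite_eq_else_one, Fintype.card_fin, WGraph.compWeight]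
end

section
/- (Partial-field model.) If each magnetic field vector has the form M_i = (M_{i,1},…,M_{i,r}, 0,…,0) for a fixed 0 ≤ r ≤ q, then Z(G) = V(G, ω; {X_M}, {e^{β J_{a,b}} − 1}_{{a,b}∈E(G)}), where ω(v_i) = M_i and X_M = (q − r) + Σ_{α=1}^r e^{β M_α}. -/
open Finset

/-! Expanding `e^{-β h(σ)}` gives, for every colouring `σ`, a product of one factor per edge
(`e^{β J}` if the edge is monochromatic, `1` otherwise) and one per vertex (`e^{β M_{v,σ_v}}`).
Writing the edge factor of `e` as `1 + (e^{β J_e} - 1)·[σ` constant on `e]` splits `Z(G)` into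
`Z(G - e)` and a sum over colourings constant on `e`, which are exactly the colourings of `G / e`,
the two vertex factors merging into the factor of the summed field. So `Z` obeys the
deletion–contraction recurrences of `V` with `γ_e = e^{β J_e} - 1`, and for an edgeless graph
`Z = ∏_v Σ_α e^{β M_{v,α}} = ∏_v X_{M_v}` since each of the `q - r` vanishing coordinates
contributes `1`. Induction on the number of edges finishes the proof. -/

open Complex

theorem WGraph.card_E_delete {S L : Type} (G : WGraph S L) (e : G.E) :
    Fintype.card (G.delete e).E = Fintype.card G.E - 1 := by
  rw [Fintype.card_eq_nat_card]
  show Nat.card {x : G.E // x ≠ e} = _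
  simp

theorem WGraph.contract_ω_apply_eq_zero {ι M L : Type} [AddZeroClass M] (G : WGraph (ι → M) L)
    (e : G.E) (h : ¬ G.IsLoop e) {α : ι} (hα : ∀ v, G.ω v α = 0) (w : (G.contract e h).V) :
    (G.contract e h).ω w α = 0 := by
  by_cases hw : w.1 = (G.ends e).1
  · rw [show (G.contract e h).ω w = _ from if_pos hw, Pi.add_apply, hα, hα, add_zero]
  · rw [show (G.contract e h).ω w = _ from if_neg hw, hα]

theorem sum_exp_mul_of_apply_eq_zero_of_le (q r : ℕ) (hr : r ≤ q) (β : ℂ) (M : Fin q → ℂ)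
    (hM : ∀ α : Fin q, r ≤ (α : ℕ) → M α = 0) :
    ∑ α : Fin q, exp (β * M α) =
      ((q : ℂ) - (r : ℂ)) + ∑ α : Fin q, if (α : ℕ) < r then exp (β * M α) else 0 := by
  have hsplit : ∀ α : Fin q, exp (β * M α) =
      (1 - if (α : ℕ) < r then 1 else 0) + if (α : ℕ) < r then exp (β * M α) else 0 := by
    intro α
    split_ifs with hα
    · ring
    · simp [hM α (not_lt.mp hα)]
  rw [sum_congr rfl fun α _ => hsplit α, sum_add_distrib, sum_sub_distrib, sum_boole,
    Fin.card_filter_val_lt, min_eq_right hr]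
  simp

theorem apply_dite_subtype_ne {α β : Type} [DecidableEq α] (f : α → β) {a b : α}
    (hab : f a = f b) (ha : a ≠ b) (v : α) :
    f (if hv : v = b then (⟨a, ha⟩ : {v // v ≠ b}) else ⟨v, hv⟩).1 = f v := by
  split_ifs with hv
  · rw [hv, hab]
  · rfl

section Potts

variable (q : ℕ) (β : ℂ) (G : WGraph (Fin q → ℂ) ℂ)

noncomputable def pottsWeight (σ : G.V → Fin q) : ℂ :=
  (∏ e : G.E, if σ (G.ends e).1 = σ (G.ends e).2 then exp (β * G.γ e) else 1) *
    ∏ v : G.V, exp (β * G.ω v (σ v))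

theorem pottsZ_eq_sum_pottsWeight : pottsZ q β G = ∑ σ : G.V → Fin q, pottsWeight q β G σ := by
  refine sum_congr rfl fun σ _ => ?_
  have hneg : ∀ A B : ℂ, -β * (-A - B) = β * A + β * B := fun A B => by ring
  rw [pottsH, hneg, mul_sum, mul_sum, exp_add, exp_sum, exp_sum, pottsWeight]
  congr 1 <;> refine prod_congr rfl fun _ _ => ?_
  · split_ifs <;> simp
  · simp [mul_ite]

theorem pottsZ_eq_prod_of_isEmpty [IsEmpty G.E] :
    pottsZ q β G = ∏ v : G.V, ∑ α : Fin q, exp (β * G.ω v α) := by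
  rw [prod_univ_sum, Fintype.piFinset_univ, pottsZ_eq_sum_pottsWeight]
  simp [pottsWeight]

theorem pottsWeight_eq_mul_delete (e : G.E) (σ : G.V → Fin q) :
    pottsWeight q β G σ =
      (if σ (G.ends e).1 = σ (G.ends e).2 then exp (β * G.γ e) else 1) *
        pottsWeight q β (G.delete e) σ := by
  rw [pottsWeight, Fintype.prod_eq_mul_prod_subtype_ne _ e, mul_assoc]
  rfl

theorem prod_exp_ω_contract (e : G.E) (h : ¬ G.IsLoop e) (σ : G.V → Fin q)
    (hσ : σ (G.ends e).1 = σ (G.ends e).2) :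
    ∏ w : (G.contract e h).V, exp (β * (G.contract e h).ω w (σ w.1)) =
      ∏ v : G.V, exp (β * G.ω v (σ v)) := by
  let a : (G.contract e h).V := ⟨(G.ends e).1, h⟩
  have hfactor : ∀ w : (G.contract e h).V, exp (β * (G.contract e h).ω w (σ w.1)) =
      exp (β * G.ω w.1 (σ w.1)) * if w = a then exp (β * G.ω (G.ends e).2 (σ w.1)) else 1 := by
    intro w
    by_cases hw : w = a
    · have hω : (G.contract e h).ω w = G.ω (G.ends e).1 + G.ω (G.ends e).2 :=
        if_pos (congrArg Subtype.val hw)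
      rw [hω, if_pos hw, Pi.add_apply, mul_add, exp_add, hw]
    · have hω : (G.contract e h).ω w = G.ω w.1 := if_neg fun hw' => hw (Subtype.ext hw')
      rw [hω, if_neg hw, mul_one]
  rw [prod_congr rfl fun w _ => hfactor w, prod_mul_distrib, prod_ite_eq', if_pos (mem_univ _),
    Fintype.prod_eq_mul_prod_subtype_ne _ (G.ends e).2, mul_comm, ← hσ]
  rfl

theorem pottsWeight_delete_eq_contract (e : G.E) (h : ¬ G.IsLoop e) (σ : G.V → Fin q)
    (hσ : σ (G.ends e).1 = σ (G.ends e).2) :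
    pottsWeight q β (G.delete e) σ = pottsWeight q β (G.contract e h) (fun v => σ v.1) := by
  unfold pottsWeight
  congr 1
  · refine prod_congr rfl fun e' _ => ?_
    dsimp only [WGraph.contract, WGraph.delete]
    simp only [apply_dite_subtype_ne σ hσ h]
    rfl
  · exact (prod_exp_ω_contract q β G e h σ hσ).symm

theorem sum_pottsWeight_delete_filter (e : G.E) (h : ¬ G.IsLoop e) :
    ∑ σ : G.V → Fin q with σ (G.ends e).1 = σ (G.ends e).2, pottsWeight q β (G.delete e) σ =
      pottsZ q β (G.contract e h) := by
  rw [pottsZ_eq_sum_pottsWeight]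
  refine sum_nbij' (fun σ v => σ v.1)
    (fun τ v => if hv : v = (G.ends e).2 then τ ⟨(G.ends e).1, h⟩ else τ ⟨v, hv⟩)
    (by simp) ?_ ?_ (fun τ _ => ?_) ?_
  · intro τ _
    simp [dif_neg (show (G.ends e).1 ≠ (G.ends e).2 from h)]
  · intro σ hσ
    funext v
    split_ifs with hv
    · exact (mem_filter.mp hσ).2.trans (congrArg σ hv.symm)
    · rfl
  · funext v
    exact dif_neg v.2
  · intro σ hσ
    exact pottsWeight_delete_eq_contract q β G e h σ (mem_filter.mp hσ).2

theorem pottsZ_eq_mul_delete_of_isLoop (e : G.E) (h : G.IsLoop e) :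
    pottsZ q β G = exp (β * G.γ e) * pottsZ q β (G.delete e) := by
  rw [pottsZ_eq_sum_pottsWeight, pottsZ_eq_sum_pottsWeight q β (G.delete e), mul_sum]
  exact sum_congr rfl fun σ _ => by rw [pottsWeight_eq_mul_delete q β G e, if_pos (congrArg σ h)]

theorem pottsZ_eq_delete_add_contract (e : G.E) (h : ¬ G.IsLoop e) :
    pottsZ q β G =
      pottsZ q β (G.delete e) + (exp (β * G.γ e) - 1) * pottsZ q β (G.contract e h) := by
  rw [pottsZ_eq_sum_pottsWeight, pottsZ_eq_sum_pottsWeight q β (G.delete e),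
    ← sum_pottsWeight_delete_filter q β G e h]
  -- `erw`: `G.V` and `(G.delete e).V` agree only after unfolding `WGraph.delete`.
  erw [mul_sum, sum_filter, ← sum_add_distrib]
  refine sum_congr rfl fun σ _ => ?_
  rw [pottsWeight_eq_mul_delete q β G e]
  split_ifs <;> ring

end Potts

/-- partial-field model, Sokal: if the last `q - r` coordinates of every
magnetic field vector vanish, then `Z(G)` is the evaluation of the V-polynomial at
`x_M = (q-r) + Σ_{α=1}^r e^{βM_α}` and `γ_e = e^{βJ_e} - 1`. -/
theorem pottsZ_partial_field_eq_V (q r : ℕ) (hr : r ≤ q) (β : ℂ)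
    (Vpoly : WGraph (Fin q → ℂ) ℂ → ℂ)
    (hV1 : ∀ (G : WGraph (Fin q → ℂ) ℂ) (e : G.E) (h : ¬ G.IsLoop e),
      Vpoly G = Vpoly (G.delete e) + G.γ e * Vpoly (G.contract e h))
    (hV2 : ∀ (G : WGraph (Fin q → ℂ) ℂ) (e : G.E), G.IsLoop e →
      Vpoly G = (G.γ e + 1) * Vpoly (G.delete e))
    (hV3 : ∀ G : WGraph (Fin q → ℂ) ℂ, IsEmpty G.E →
      Vpoly G = ∏ v : G.V,
        (((q : ℂ) - (r : ℂ)) +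
          ∑ α : Fin q, if (α : ℕ) < r then Complex.exp (β * G.ω v α) else 0)) :
    ∀ G : WGraph (Fin q → ℂ) ℂ,
      (∀ (v : G.V) (α : Fin q), r ≤ (α : ℕ) → G.ω v α = 0) →
      pottsZ q β G = Vpoly (G.mapEdges (fun J => Complex.exp (β * J) - 1)) := by
  intro G hG
  induction hn : Fintype.card G.E generalizing G with
  | zero =>
    have hE : IsEmpty G.E := Fintype.card_eq_zero_iff.mp hn
    rw [pottsZ_eq_prod_of_isEmpty, hV3 (G.mapEdges _) hE]
    exact prod_congr rfl fun v _ => sum_exp_mul_of_apply_eq_zero_of_le q r hr β (G.ω v) (hG v)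
  | succ n ih =>
    obtain ⟨e⟩ : Nonempty G.E := Fintype.card_pos_iff.mp (by omega)
    have hcard : Fintype.card (G.delete e).E = n := (G.card_E_delete e).trans (by omega)
    by_cases hloop : G.IsLoop e
    · rw [pottsZ_eq_mul_delete_of_isLoop q β G e hloop, hV2 (G.mapEdges _) e hloop,
        ih (G.delete e) hG hcard]
      congr 1
      exact (sub_add_cancel _ _).symm
    · have hGc : ∀ (w : (G.contract e hloop).V) (α : Fin q), r ≤ (α : ℕ) →
          (G.contract e hloop).ω w α = 0 := fun w α hα =>
        G.contract_ω_apply_eq_zero e hloop (fun v => hG v α hα) w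
      rw [pottsZ_eq_delete_add_contract q β G e hloop, hV1 (G.mapEdges _) e hloop,
        ih (G.delete e) hG hcard, ih (G.contract e hloop) hGc hcard]
      -- `mapEdges` commutes with `delete` and `contract` definitionally.
      rfl
end

section
/- For a connected graph G with magnetic field vectors M_i ∈ ℂ^q, the variable-field Potts partition function Z(G) lies in the subring generated by the quantities e^{β J_e} − 1 (e ∈ E(G)) and X_M = Σ_{α=1}^q e^{β M_α} for M ranging over the set of all sums Σ_{i} ε_i M_i with ε_i ∈ {0, 1}; i.e., Z(G) is a polynomial with integer coefficients in these quantities. -/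
open Finset

/-! Fortuin–Kasteleyn expansion: since `e^{βJ δ} = 1 + (e^{βJ} - 1) δ` for `δ ∈ {0, 1}`,
expanding the product over the edges writes `Z(G)` as a sum over edge sets `A` of
`∏_{e ∈ A} (e^{βJ_e} - 1)` times the sum over the colourings that are constant on the components
of `(V, A)`. That inner sum factors over the components, and a component `C` contributes `X_M` with
`M = Σ_{i ∈ C} M_i`. -/

namespace SimpleGraph

variable {V α : Type*} (H : SimpleGraph V)

def ConnectedComponent.liftEquiv :
    {σ : V → α // ∀ v w, H.Adj v w → σ v = σ w} ≃ (H.ConnectedComponent → α) where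
  toFun σ := ConnectedComponent.lift σ.1 fun _ _ p hp => by
    clear hp
    induction p with
    | nil => rfl
    | cons h _ ih => exact (σ.2 _ _ h).trans ih
  invFun τ := ⟨τ ∘ H.connectedComponentMk,
    fun _ _ h => congrArg τ (ConnectedComponent.sound h.reachable)⟩
  left_inv _ := rfl
  right_inv τ := funext (ConnectedComponent.ind fun _ => rfl)

theorem sum_prod_filter_adj_eq_prod_connectedComponent [Fintype V] [DecidableEq V]
    [DecidableRel H.Adj] [Fintype α] [DecidableEq α]
    [Fintype H.ConnectedComponent] [DecidableEq H.ConnectedComponent]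
    {R : Type*} [CommSemiring R] (f : V → α → R) :
    ∑ σ : V → α with ∀ v w, H.Adj v w → σ v = σ w, ∏ v, f v (σ v) =
      ∏ c : H.ConnectedComponent, ∑ a, ∏ v with H.connectedComponentMk v = c, f v a := by
  rw [Fintype.prod_sum, ← Finset.sum_subtype_eq_sum_filter, Finset.subtype_univ,
    ← (ConnectedComponent.liftEquiv H).sum_comp]
  refine Fintype.sum_congr _ _ fun σ => ?_
  rw [← Finset.prod_fiberwise univ H.connectedComponentMk]
  refine Finset.prod_congr rfl fun c _ => Finset.prod_congr rfl fun v hv => ?_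
  rw [← (Finset.mem_filter.1 hv).2]
  rfl

end SimpleGraph

namespace WGraph

variable {S L : Type}

theorem forall_stateGraph_adj_iff {α : Type*} (G : WGraph S L) (A : Finset G.E) (σ : G.V → α) :
    (∀ v w, (G.stateGraph A).Adj v w → σ v = σ w) ↔ ∀ e ∈ A, σ (G.ends e).1 = σ (G.ends e).2 := by
  simp only [stateGraph, SimpleGraph.fromRel_adj]
  constructor
  · intro h e he
    by_cases hloop : (G.ends e).1 = (G.ends e).2
    · rw [hloop]
    · exact h _ _ ⟨hloop, Or.inl ⟨e, he, rfl⟩⟩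
  · rintro h v w ⟨-, ⟨e, he, hvw⟩ | ⟨e, he, hwv⟩⟩
    · simpa [hvw] using h e he
    · simpa [hwv] using (h e he).symm

end WGraph

section Potts

variable (q : ℕ) (β : ℂ) (G : WGraph (Fin q → ℂ) ℂ)

theorem exp_neg_mul_pottsH (σ : G.V → Fin q) :
    Complex.exp (-β * pottsH q G σ) =
      (∏ e, (1 + if σ (G.ends e).1 = σ (G.ends e).2 then Complex.exp (β * G.γ e) - 1 else 0)) *
        ∏ v, Complex.exp (β * G.ω v (σ v)) := by
  have hexponent : -β * pottsH q G σ =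
      β * ∑ e, (if σ (G.ends e).1 = σ (G.ends e).2 then G.γ e else 0) +
        β * ∑ v, G.ω v (σ v) := by
    simp only [pottsH, mul_ite, mul_one, mul_zero, Finset.sum_ite_eq', Finset.mem_univ, if_true]
    ring
  rw [hexponent, Finset.mul_sum, Finset.mul_sum, Complex.exp_add, Complex.exp_sum,
    Complex.exp_sum]
  congr 1
  refine Finset.prod_congr rfl fun e _ => ?_
  split_ifs <;> simp

open scoped Classical in
theorem pottsZ_eq_sum_edgeSubsets :
    pottsZ q β G = ∑ A : Finset G.E, (∏ e ∈ A, (Complex.exp (β * G.γ e) - 1)) *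
      ∑ σ : G.V → Fin q with ∀ v w, (G.stateGraph A).Adj v w → σ v = σ w,
        ∏ v, Complex.exp (β * G.ω v (σ v)) := by
  simp only [pottsZ, exp_neg_mul_pottsH, Finset.prod_one_add, Finset.powerset_univ,
    Finset.prod_ite_zero, Finset.sum_mul, ite_mul, zero_mul]
  rw [Finset.sum_comm]
  refine Finset.sum_congr rfl fun A _ => ?_
  simp only [← Finset.sum_filter, Finset.mul_sum, WGraph.forall_stateGraph_adj_iff]

end Potts

open scoped Classical in
theorem pottsZ_is_polynomial_general (q : ℕ) (β : ℂ) (G : WGraph (Fin q → ℂ) ℂ) :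
    pottsZ q β G ∈ Subring.closure
      ({c : ℂ | ∃ e : G.E, c = Complex.exp (β * G.γ e) - 1} ∪
       {c : ℂ | ∃ ε : G.V → Bool, c =
          ∑ α : Fin q,
            Complex.exp (β * (∑ v ∈ Finset.univ.filter (fun v => ε v = true), G.ω v) α)}) := by
  rw [pottsZ_eq_sum_edgeSubsets]
  refine Subring.sum_mem _ fun A _ => Subring.mul_mem _
    (Subring.prod_mem _ fun e _ => Subring.subset_closure (Or.inl ⟨e, rfl⟩)) ?_
  rw [SimpleGraph.sum_prod_filter_adj_eq_prod_connectedComponent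
    (f := fun v a => Complex.exp (β * G.ω v a))]
  refine Subring.prod_mem _ fun c _ => Subring.subset_closure (Or.inr
    ⟨fun v => decide ((G.stateGraph A).connectedComponentMk v = c), ?_⟩)
  simp only [decide_eq_true_eq, ← Complex.exp_sum, ← Finset.mul_sum, Finset.sum_apply]

open scoped Classical in
/-- for a connected graph, the variable-field Potts partition function lies in
the subring of ℂ generated by the quantities `e^{βJ_e} - 1` and the `X_M = Σ_α e^{βM_α}` for
`M` ranging over all sums `Σ_i ε_i M_i` with `ε_i ∈ {0,1}`. -/
theorem pottsZ_is_polynomial (q : ℕ) (β : ℂ) (G : WGraph (Fin q → ℂ) ℂ)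
    (hconn : (G.stateGraph Finset.univ).Connected) :
    pottsZ q β G ∈ Subring.closure
      ({c : ℂ | ∃ e : G.E, c = Complex.exp (β * G.γ e) - 1} ∪
       {c : ℂ | ∃ ε : G.V → Bool, c =
          ∑ α : Fin q,
            Complex.exp (β * (∑ v ∈ Finset.univ.filter (fun v => ε v = true), G.ω v) α)}) :=
  pottsZ_is_polynomial_general q β G
end
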